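/- Let d, n, T ≥ 1 and let K ⊆ [0,1]^d be convex. For each t ∈ {1,…,T} and j ∈ {1,…,n}, let f_t^j : ℝ^d → ℝ be continuous DR-submodular, nonnegative and monotone on X = [0,1]^d (x ≤ y implies f_t^j(x) ≤ f_t^j(y)) with f_t^j(0) = 0, differentiable on X with continuous gradient satisfying ‖∇f_t^j(x) − ∇f_t^j(y)‖ ≤ β‖x − y‖ for all x, y ∈ X, let x̂_t^j ∈ K, and define g_t^j(x) = ∫_0^1 e^{z−1} · ∇f_t^j(z x) dz. Then for every i ∈ {1,…,n} and every x ∈ K: (1 − 1/e)·Σ_{t=1}^T Σ_{j=1}^n f_t^j(x) − Σ_{t=1}^T Σ_{j=1}^n f_t^j(x̂_t^i) ≤ Σ_{t=1}^T Σ_{j=1}^n ⟨g_t^j(x̂_t^j), x − x̂_t^i⟩ + Σ_{t=1}^T Σ_{j=1}^n ⟨∇f_t^j(x̂_t^j) − g_t^j(x̂_t^j), x̂_t^j − x̂_t^i⟩ + (β/2)·Σ_{t=1}^T Σ_{j=1}^n ‖x̂_t^i − x̂_t^j‖². -/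

import Mathlib

open MeasureTheory Finset

noncomputable section

/-- The unit cube `[0,1]^d` in `ℝ^d` (with Euclidean structure). -/
def cube (d : ℕ) : Set (EuclideanSpace ℝ (Fin d)) :=
  {x | ∀ i, x i ∈ Set.Icc (0 : ℝ) 1}

/-- `f` is continuous DR-submodular on the unit cube `[0,1]^d`: for coordinatewise
comparable points `x ≤ y` in the cube and any feasible move of size `z ≥ 0` along a
coordinate direction, the gain at `x` dominates the gain at `y`. -/
def DRSubmodularOn (d : ℕ) (f : EuclideanSpace ℝ (Fin d) → ℝ) : Prop :=
  ∀ x y : EuclideanSpace ℝ (Fin d), x ∈ cube d → y ∈ cube d → (∀ i, x i ≤ y i) →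
    ∀ (j : Fin d) (z : ℝ), 0 ≤ z →
      x + z • EuclideanSpace.single j (1 : ℝ) ∈ cube d →
      y + z • EuclideanSpace.single j (1 : ℝ) ∈ cube d →
      f (y + z • EuclideanSpace.single j (1 : ℝ)) - f y ≤
        f (x + z • EuclideanSpace.single j (1 : ℝ)) - f x

/-!
Fix `t, j` and put `y = x̂_t^j`. Since `f` is monotone and DR-submodular, its gradient is
nonnegative and coordinatewise antitone on the cube (both read off one-sided difference
quotients along coordinate lines), so `f` is concave along nonnegative directions and
`f x - f u ≤ ⟪∇f u, x⟫` for all `u, x` in the cube. Applied at `u = z y`, this says that the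
derivative `e^{z-1} (f x - f (z y) - ⟪∇f (z y), y⟫)` of `z ↦ e^{z-1} (f x - f (z y))` is at most
`e^{z-1} ⟪∇f (z y), x - y⟫`; integrating over `[0,1]` gives the boosting inequality
`(1 - 1/e) f x - f y ≤ ⟪g y, x - y⟫`. The `β`-Lipschitz gradient gives
`f y - f x̂_t^i ≤ ⟪∇f y, y - x̂_t^i⟫ + β/2 ‖x̂_t^i - y‖²`. Adding the two and summing over
`t, j` is the theorem.
-/

open Filter Topology

theorem hasDerivWithinAt_line {E : Type*} [NormedAddCommGroup E] [NormedSpace ℝ E] (x v : E)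
    (S : Set ℝ) (t : ℝ) : HasDerivWithinAt (fun τ : ℝ => x + τ • v) v S t := by
  simpa using (((hasDerivAt_id t).smul_const v).const_add x).hasDerivWithinAt

theorem sub_le_integral_of_hasDerivWithinAt_Icc {g g' φ : ℝ → ℝ} {a b : ℝ} (hab : a ≤ b)
    (hg : ∀ t ∈ Set.Icc a b, HasDerivWithinAt g (g' t) (Set.Icc a b) t)
    (hφ : IntegrableOn φ (Set.Icc a b)) (hle : ∀ t ∈ Set.Ioo a b, g' t ≤ φ t) :
    g b - g a ≤ ∫ t in a..b, φ t :=
  intervalIntegral.sub_le_integral_of_hasDeriv_right_of_le hab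
    (fun t ht => (hg t ht).continuousWithinAt)
    (fun t ht => ((hg t (Set.Ioo_subset_Icc_self ht)).hasDerivAt
      (Icc_mem_nhds ht.1 ht.2)).hasDerivWithinAt) hφ hle

theorem accPt_Icc {a b x : ℝ} (hab : a < b) (hx : x ∈ Set.Icc a b) :
    AccPt x (𝓟 (Set.Icc a b)) := by
  rcases lt_or_eq_of_le hx.2 with hxb | rfl
  · have : (𝓝[Set.Ioo x b \ {x}] x).NeBot := by simpa using left_nhdsWithin_Ioo_neBot hxb
    exact (accPt_principal_iff_nhdsWithin.2 this).mono
      (principal_mono.2 fun y hy => ⟨hx.1.trans hy.1.le, hy.2.le⟩)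
  · have : (𝓝[Set.Ioo a x \ {x}] x).NeBot := by simpa using right_nhdsWithin_Ioo_neBot hab
    exact (accPt_principal_iff_nhdsWithin.2 this).mono
      (principal_mono.2 Set.Ioo_subset_Icc_self)

theorem inner_nonneg_of_nonneg {ι : Type*} [Fintype ι] {a b : EuclideanSpace ℝ ι}
    (ha : ∀ i, 0 ≤ a i) (hb : ∀ i, 0 ≤ b i) : 0 ≤ inner ℝ a b := by
  rw [PiLp.inner_apply]
  exact Finset.sum_nonneg fun i _ => by simpa using mul_nonneg (hb i) (ha i)

section Gradient

variable {E : Type*} [NormedAddCommGroup E] [InnerProductSpace ℝ E] [CompleteSpace E] {s : Set E}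
  {f : E → ℝ} {f' : E → E}

def boostedGradient (f' : E → E) (y : E) : E :=
  ∫ z in (0 : ℝ)..1, Real.exp (z - 1) • f' (z • y)

theorem HasGradientWithinAt.comp_hasDerivWithinAt {g : E} {γ : ℝ → E} {γ' : E} {S : Set ℝ}
    {t : ℝ} (hf : HasGradientWithinAt f g s (γ t)) (hγ : HasDerivWithinAt γ γ' S t)
    (hS : Set.MapsTo γ S s) : HasDerivWithinAt (fun τ => f (γ τ)) (inner ℝ g γ') S t :=
  hf.hasFDerivWithinAt.comp_hasDerivWithinAt t hγ hS

variable (hgrad : ∀ y ∈ s, HasGradientWithinAt f (f' y) s y)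
include hgrad

theorem sub_le_of_inner_gradient_le {x v : E}
    (hseg : Set.MapsTo (fun t : ℝ => x + t • v) (Set.Icc 0 1) s) {c : ℝ}
    (hc : ∀ t ∈ Set.Ioo (0 : ℝ) 1, inner ℝ (f' (x + t • v)) v ≤ c) :
    f (x + v) - f x ≤ c := by
  simpa using sub_le_integral_of_hasDerivWithinAt_Icc zero_le_one
    (fun t ht => (hgrad _ (hseg ht)).comp_hasDerivWithinAt (hasDerivWithinAt_line x v _ t) hseg)
    continuousOn_const.integrableOn_Icc hc

theorem Convex.add_inner_gradient_sub_le (hs : Convex ℝ s) {β : ℝ} {x y : E} (hx : x ∈ s)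
    (hy : y ∈ s) (hlip : ∀ z ∈ s, ‖f' z - f' x‖ ≤ β * ‖z - x‖) :
    f x + inner ℝ (f' x) (y - x) - f y ≤ β / 2 * ‖y - x‖ ^ 2 := by
  set v := y - x
  have hseg : Set.MapsTo (fun t : ℝ => x + t • v) (Set.Icc 0 1) s :=
    fun t ht => hs.add_smul_sub_mem hx hy ht
  have hderiv : ∀ t ∈ Set.Icc (0 : ℝ) 1,
      HasDerivWithinAt (fun t => t * inner ℝ (f' x) v - f (x + t • v))
        (inner ℝ (f' x) v - inner ℝ (f' (x + t • v)) v) (Set.Icc 0 1) t := fun t ht => by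
    simpa using ((hasDerivWithinAt_id t _).mul_const (inner ℝ (f' x) v)).fun_sub
      ((hgrad _ (hseg ht)).comp_hasDerivWithinAt (hasDerivWithinAt_line x v _ t) hseg)
  have hbound : ∀ t ∈ Set.Ioo (0 : ℝ) 1,
      inner ℝ (f' x) v - inner ℝ (f' (x + t • v)) v ≤ β * ‖v‖ ^ 2 * t := fun t ht => by
    calc inner ℝ (f' x) v - inner ℝ (f' (x + t • v)) v
        = inner ℝ (f' x - f' (x + t • v)) v := (inner_sub_left _ _ _).symm
      _ ≤ ‖f' (x + t • v) - f' x‖ * ‖v‖ := by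
          rw [← norm_neg (f' (x + t • v) - f' x), neg_sub]; exact real_inner_le_norm _ _
      _ ≤ β * ‖(x + t • v) - x‖ * ‖v‖ := by gcongr; exact hlip _ (hseg ⟨ht.1.le, ht.2.le⟩)
      _ = β * ‖v‖ ^ 2 * t := by
          rw [add_sub_cancel_left, norm_smul, Real.norm_of_nonneg ht.1.le]; ring
  have := sub_le_integral_of_hasDerivWithinAt_Icc (φ := fun t => β * ‖v‖ ^ 2 * t) zero_le_one
    hderiv (continuous_const.mul continuous_id).integrableOn_Icc hbound
  rw [intervalIntegral.integral_const_mul, integral_id] at this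
  simp only [one_mul, one_smul, zero_mul, zero_smul, add_zero, zero_sub, v, add_sub_cancel] at this
  linarith

theorem one_sub_inv_exp_mul_sub_le_inner_boostedGradient {x y : E}
    (hcont : ContinuousOn f' s) (hseg : Set.MapsTo (fun z : ℝ => z • y) (Set.Icc 0 1) s)
    (hzero : f 0 = 0) (hdom : ∀ z ∈ Set.Ioo (0 : ℝ) 1, f x - f (z • y) ≤ inner ℝ (f' (z • y)) x) :
    (1 - 1 / Real.exp 1) * f x - f y ≤ inner ℝ (boostedGradient f' y) (x - y) := by
  have hexp : ∀ z : ℝ, HasDerivAt (fun z => Real.exp (z - 1)) (Real.exp (z - 1)) z := fun z =>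
    (Real.hasDerivAt_exp (z - 1)).comp_sub_const z 1
  have hpath : ContinuousOn (fun z : ℝ => f' (z • y)) (Set.Icc 0 1) :=
    hcont.comp (continuous_id.smul continuous_const).continuousOn hseg
  have hderiv : ∀ z ∈ Set.Icc (0 : ℝ) 1,
      HasDerivWithinAt (fun z => Real.exp (z - 1) * (f x - f (z • y)))
        (Real.exp (z - 1) * (f x - f (z • y)) + Real.exp (z - 1) * -inner ℝ (f' (z • y)) y)
        (Set.Icc 0 1) z := fun z hz =>
    (hexp z).hasDerivWithinAt.mul <| by
      simpa using ((hgrad _ (hseg hz)).comp_hasDerivWithinAt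
        ((hasDerivAt_id z).smul_const y).hasDerivWithinAt hseg).const_sub (f x)
  have hle : ∀ z ∈ Set.Ioo (0 : ℝ) 1,
      Real.exp (z - 1) * (f x - f (z • y)) + Real.exp (z - 1) * -inner ℝ (f' (z • y)) y ≤
        Real.exp (z - 1) * inner ℝ (f' (z • y)) (x - y) := fun z hz => by
    rw [inner_sub_right, ← mul_add]
    gcongr
    linarith [hdom z hz]
  have hint : IntervalIntegrable (fun z : ℝ => Real.exp (z - 1) • f' (z • y)) volume 0 1 :=
    ((Real.continuous_exp.comp (continuous_sub_right 1)).continuousOn.smul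
      hpath).intervalIntegrable_of_Icc zero_le_one
  have hswap : inner ℝ (boostedGradient f' y) (x - y) =
      ∫ z in (0 : ℝ)..1, Real.exp (z - 1) * inner ℝ (f' (z • y)) (x - y) := by
    rw [boostedGradient, real_inner_comm, ← innerSL_apply_apply ℝ,
      ← (innerSL ℝ (x - y)).intervalIntegral_comp_comm hint]
    congr 1 with z
    rw [innerSL_apply_apply, inner_smul_right, real_inner_comm]
  have := sub_le_integral_of_hasDerivWithinAt_Icc
    (φ := fun z => Real.exp (z - 1) * inner ℝ (f' (z • y)) (x - y)) zero_le_one hderiv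
    (((Real.continuous_exp.comp (continuous_sub_right 1)).continuousOn.mul
      (hpath.inner continuousOn_const)).integrableOn_Icc) hle
  rw [hswap, one_div]
  simp only [sub_self, Real.exp_zero, one_mul, one_smul, zero_sub, zero_smul, hzero, sub_zero,
    Real.exp_neg] at this
  linarith

end Gradient

section Cube

local notation "𝐞" j:max => EuclideanSpace.single j (1 : ℝ)

variable {d : ℕ} {f : EuclideanSpace ℝ (Fin d) → ℝ}
  {f' : EuclideanSpace ℝ (Fin d) → EuclideanSpace ℝ (Fin d)}

theorem convex_cube : Convex ℝ (cube d) :=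
  fun _ hx _ hy _ _ ha hb hab i => by simpa using convex_Icc (0 : ℝ) 1 (hx i) (hy i) ha hb hab

theorem zero_mem_cube : (0 : EuclideanSpace ℝ (Fin d)) ∈ cube d := fun _ => by simp

theorem add_smul_single_apply (p : EuclideanSpace ℝ (Fin d)) (s : ℝ) (j i : Fin d) :
    (p + s • 𝐞 j) i = p i + if i = j then s else 0 := by
  simp

theorem add_smul_single_mem_cube {p : EuclideanSpace ℝ (Fin d)} (hp : p ∈ cube d) {j : Fin d}
    {s : ℝ} (hs : s ∈ Set.Icc (-p j) (1 - p j)) :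
    p + s • 𝐞 j ∈ cube d := fun i => by
  rw [add_smul_single_apply]
  split_ifs with hij
  · subst hij; exact ⟨by linarith [hs.1], by linarith [hs.2]⟩
  · simpa using hp i

theorem hasDerivWithinAt_add_smul_single {p : EuclideanSpace ℝ (Fin d)} (hp : p ∈ cube d)
    (hgrad : HasGradientWithinAt f (f' p) (cube d) p) (j : Fin d) :
    HasDerivWithinAt (fun s : ℝ => f (p + s • 𝐞 j)) (f' p j)
      (Set.Icc (-p j) (1 - p j)) 0 := by
  have := (show HasGradientWithinAt f (f' p) (cube d) (p + (0 : ℝ) • 𝐞 j)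
    by simpa using hgrad).comp_hasDerivWithinAt (hasDerivWithinAt_line _ _ _ _)
    (fun s hs => add_smul_single_mem_cube hp hs)
  simpa [EuclideanSpace.inner_single_right] using this

theorem gradient_nonneg_of_monotone {p : EuclideanSpace ℝ (Fin d)} (hp : p ∈ cube d)
    (hgrad : HasGradientWithinAt f (f' p) (cube d) p)
    (hmono : ∀ x ∈ cube d, ∀ y ∈ cube d, (∀ i, x i ≤ y i) → f x ≤ f y) (j : Fin d) :
    0 ≤ f' p j := by
  refine (hasDerivWithinAt_add_smul_single hp hgrad j).nonneg_of_monotoneOn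
    (accPt_Icc (by linarith) ⟨by linarith [(hp j).1], by linarith [(hp j).2]⟩) ?_
  intro s hs s' hs' hss'
  refine hmono _ (add_smul_single_mem_cube hp hs) _ (add_smul_single_mem_cube hp hs') fun i => ?_
  simp only [add_smul_single_apply]
  split_ifs <;> linarith

theorem gradient_antitone_of_drSubmodular_of_lt {u w : EuclideanSpace ℝ (Fin d)}
    (hu : u ∈ cube d) (hw : w ∈ cube d) (hgu : HasGradientWithinAt f (f' u) (cube d) u)
    (hgw : HasGradientWithinAt f (f' w) (cube d) w) (hsub : DRSubmodularOn d f)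
    (hle : ∀ i, u i ≤ w i) {j : Fin d} (hj : w j < u j + 1) :
    f' w j ≤ f' u j := by
  set S := Set.Icc (-u j) (1 - w j)
  have hSu : S ⊆ Set.Icc (-u j) (1 - u j) := Set.Icc_subset_Icc le_rfl (by linarith [hle j])
  have hSw : S ⊆ Set.Icc (-w j) (1 - w j) := Set.Icc_subset_Icc (by linarith [hle j]) le_rfl
  have hderiv : HasDerivWithinAt (fun s : ℝ => f (u + s • 𝐞 j) - f (w + s • 𝐞 j))
      (f' u j - f' w j) S 0 :=
    ((hasDerivWithinAt_add_smul_single hu hgu j).mono hSu).sub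
      ((hasDerivWithinAt_add_smul_single hw hgw j).mono hSw)
  have hmono : MonotoneOn (fun s : ℝ => f (u + s • 𝐞 j) - f (w + s • 𝐞 j)) S := by
    intro s hs s' hs' hss'
    have hshift : ∀ p : EuclideanSpace ℝ (Fin d), p + s • 𝐞 j + (s' - s) • 𝐞 j = p + s' • 𝐞 j :=
      fun p => by module
    have hdr := hsub (u + s • 𝐞 j) (w + s • 𝐞 j) (add_smul_single_mem_cube hu (hSu hs))
      (add_smul_single_mem_cube hw (hSw hs))
      (fun i => by simp only [add_smul_single_apply]; linarith [hle i]) j (s' - s) (by linarith)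
      (by rw [hshift]; exact add_smul_single_mem_cube hu (hSu hs'))
      (by rw [hshift]; exact add_smul_single_mem_cube hw (hSw hs'))
    simp only [hshift] at hdr
    linarith
  have := hderiv.nonneg_of_monotoneOn
    (accPt_Icc (by linarith) ⟨by linarith [(hu j).1], by linarith [(hw j).2]⟩) hmono
  linarith

theorem gradient_antitone_of_drSubmodular
    (hgrad : ∀ x ∈ cube d, HasGradientWithinAt f (f' x) (cube d) x) (hsub : DRSubmodularOn d f)
    {u w : EuclideanSpace ℝ (Fin d)} (hu : u ∈ cube d) (hw : w ∈ cube d)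
    (hle : ∀ i, u i ≤ w i) (j : Fin d) :
    f' w j ≤ f' u j := by
  -- Going through `m`, whose `j`-th coordinate is halfway between `u j` and `w j`, leaves room to
  -- move both points of each pair along `𝐞 j`, even when `u j = 0` and `w j = 1`.
  set m := u + ((w j - u j) / 2) • 𝐞 j
  have hmj : m j = (u j + w j) / 2 := by simp only [m, add_smul_single_apply]; simp; ring
  have hm : m ∈ cube d := add_smul_single_mem_cube hu
    ⟨by linarith [hle j, (hu j).1], by linarith [hle j, (hu j).1, (hw j).2]⟩
  have hum : ∀ i, u i ≤ m i := fun i => by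
    simp only [m, add_smul_single_apply]; split_ifs with h
    · subst h; linarith [hle i]
    · linarith
  have hmw : ∀ i, m i ≤ w i := fun i => by
    simp only [m, add_smul_single_apply]; split_ifs with h
    · subst h; linarith [hle i]
    · linarith [hle i]
  exact (gradient_antitone_of_drSubmodular_of_lt hm hw (hgrad m hm) (hgrad w hw) hsub hmw
    (by linarith [(hu j).1, (hw j).2])).trans
    (gradient_antitone_of_drSubmodular_of_lt hu hm (hgrad u hu) (hgrad m hm) hsub hum
    (by linarith [(hu j).1, (hw j).2]))

section MonotoneDRSubmodular

variable (hgrad : ∀ x ∈ cube d, HasGradientWithinAt f (f' x) (cube d) x)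
  (hsub : DRSubmodularOn d f)
  (hmono : ∀ x ∈ cube d, ∀ y ∈ cube d, (∀ i, x i ≤ y i) → f x ≤ f y)
include hgrad hsub

theorem sub_le_inner_gradient_of_le {u w : EuclideanSpace ℝ (Fin d)} (hu : u ∈ cube d)
    (hw : w ∈ cube d) (hle : ∀ i, u i ≤ w i) :
    f w - f u ≤ inner ℝ (f' u) (w - u) := by
  have hseg : Set.MapsTo (fun t : ℝ => u + t • (w - u)) (Set.Icc 0 1) (cube d) :=
    fun t ht => convex_cube.add_smul_sub_mem hu hw ht
  have hv : ∀ i, 0 ≤ (w - u) i := fun i => by simpa using hle i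
  simpa using sub_le_of_inner_gradient_le hgrad hseg fun t ht => by
    rw [← sub_nonneg, ← inner_sub_left]
    refine inner_nonneg_of_nonneg (fun i => ?_) hv
    have hut : ∀ i, u i ≤ (u + t • (w - u)) i := fun i => by
      simpa using mul_nonneg ht.1.le (hv i)
    simpa using gradient_antitone_of_drSubmodular hgrad hsub hu (hseg ⟨ht.1.le, ht.2.le⟩) hut i

include hmono

theorem sub_le_inner_gradient {u x : EuclideanSpace ℝ (Fin d)} (hu : u ∈ cube d)
    (hx : x ∈ cube d) : f x - f u ≤ inner ℝ (f' u) x := by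
  set w : EuclideanSpace ℝ (Fin d) := WithLp.toLp 2 fun i => max (u i) (x i)
  have hw : w ∈ cube d := fun i => ⟨le_max_of_le_left (hu i).1, max_le (hu i).2 (hx i).2⟩
  have hconc := sub_le_inner_gradient_of_le hgrad hsub hu hw fun i => le_max_left (u i) (x i)
  have hfx := hmono x hx w hw fun i => le_max_right (u i) (x i)
  have hinner : inner ℝ (f' u) (w - u) ≤ inner ℝ (f' u) x := by
    rw [← sub_nonneg, ← inner_sub_right]
    refine inner_nonneg_of_nonneg (gradient_nonneg_of_monotone hu (hgrad u hu) hmono) fun i => ?_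
    simp only [w, PiLp.sub_apply]
    rcases max_cases (u i) (x i) with ⟨h, _⟩ | ⟨h, _⟩ <;> rw [h] <;> linarith [(hu i).1, (hx i).1]
  linarith

theorem one_sub_inv_exp_mul_sub_le_boostedGradient {β : ℝ} (hcont : ContinuousOn f' (cube d))
    (hlip : ∀ x ∈ cube d, ∀ y ∈ cube d, ‖f' x - f' y‖ ≤ β * ‖x - y‖) (hzero : f 0 = 0)
    {x y z : EuclideanSpace ℝ (Fin d)} (hx : x ∈ cube d) (hy : y ∈ cube d) (hz : z ∈ cube d) :
    (1 - 1 / Real.exp 1) * f x - f z ≤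
      inner ℝ (boostedGradient f' y) (x - z) + inner ℝ (f' y - boostedGradient f' y) (y - z) +
        β / 2 * ‖z - y‖ ^ 2 := by
  have hray : Set.MapsTo (fun τ : ℝ => τ • y) (Set.Icc 0 1) (cube d) :=
    fun τ hτ => convex_cube.smul_mem_of_zero_mem zero_mem_cube hy hτ
  have hboost := one_sub_inv_exp_mul_sub_le_inner_boostedGradient hgrad hcont hray hzero
    fun τ hτ => sub_le_inner_gradient hgrad hsub hmono (hray ⟨hτ.1.le, hτ.2.le⟩) hx
  have hsmooth := convex_cube.add_inner_gradient_sub_le hgrad hy hz fun w hw => hlip w hw y hy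
  have hflip : inner ℝ (f' y) (z - y) = -inner ℝ (f' y) (y - z) := by
    rw [← inner_neg_right, neg_sub]
  rw [show x - z = (x - y) + (y - z) by abel, inner_add_right, inner_sub_left]
  linarith

end MonotoneDRSubmodular

end Cube

theorem reduction_boosting_monotone_smooth_general
    (d n T : ℕ)
    (K : Set (EuclideanSpace ℝ (Fin d))) (hKX : K ⊆ cube d)
    (β : ℝ)
    (f : Fin T → Fin n → EuclideanSpace ℝ (Fin d) → ℝ)
    (f' : Fin T → Fin n → EuclideanSpace ℝ (Fin d) → EuclideanSpace ℝ (Fin d))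
    (hsub : ∀ t j, DRSubmodularOn d (f t j))
    (hmono : ∀ t j, ∀ x ∈ cube d, ∀ y ∈ cube d, (∀ i, x i ≤ y i) → f t j x ≤ f t j y)
    (hzero : ∀ t j, f t j 0 = 0)
    (hgrad : ∀ t j, ∀ x ∈ cube d, HasGradientWithinAt (f t j) (f' t j x) (cube d) x)
    (hcont : ∀ t j, ContinuousOn (f' t j) (cube d))
    (hlip : ∀ t j, ∀ x ∈ cube d, ∀ y ∈ cube d, ‖f' t j x - f' t j y‖ ≤ β * ‖x - y‖)
    (xhat : Fin T → Fin n → EuclideanSpace ℝ (Fin d))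
    (hxhat : ∀ t j, xhat t j ∈ K)
    (g : Fin T → Fin n → EuclideanSpace ℝ (Fin d) → EuclideanSpace ℝ (Fin d))
    (hg : ∀ t j, ∀ x ∈ K, g t j x = ∫ z in (0:ℝ)..1, Real.exp (z - 1) • f' t j (z • x)) :
    ∀ i : Fin n, ∀ x ∈ K,
      (1 - 1 / Real.exp 1) * (∑ t, ∑ j, f t j x) - ∑ t, ∑ j, f t j (xhat t i) ≤
        (∑ t, ∑ j, (inner ℝ (g t j (xhat t j)) (x - xhat t i) : ℝ)) +
          (∑ t, ∑ j,
            (inner ℝ (f' t j (xhat t j) - g t j (xhat t j)) (xhat t j - xhat t i) : ℝ)) +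
          (β / 2) * ∑ t, ∑ j, ‖xhat t i - xhat t j‖ ^ 2 := by
  intro i x hx
  have hterm : ∀ t j, (1 - 1 / Real.exp 1) * f t j x - f t j (xhat t i) ≤
      inner ℝ (g t j (xhat t j)) (x - xhat t i) +
        inner ℝ (f' t j (xhat t j) - g t j (xhat t j)) (xhat t j - xhat t i) +
        β / 2 * ‖xhat t i - xhat t j‖ ^ 2 := fun t j => by
    rw [hg t j _ (hxhat t j)]
    exact one_sub_inv_exp_mul_sub_le_boostedGradient (hgrad t j) (hsub t j) (hmono t j) (hcont t j)
      (hlip t j) (hzero t j) (hKX hx) (hKX (hxhat t j)) (hKX (hxhat t i))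
  simp only [Finset.mul_sum, ← Finset.sum_sub_distrib, ← Finset.sum_add_distrib]
  exact Finset.sum_le_sum fun t _ => Finset.sum_le_sum fun j _ => hterm t j

/-- deterministic core of Theorem 6: the monotone smooth-case variant
of the reduction based on the boosting technique. -/
theorem reduction_boosting_monotone_smooth
    (d n T : ℕ) (hd : 1 ≤ d) (hn : 1 ≤ n) (hT : 1 ≤ T)
    (K : Set (EuclideanSpace ℝ (Fin d))) (hKcvx : Convex ℝ K) (hKX : K ⊆ cube d)
    (β : ℝ)
    (f : Fin T → Fin n → EuclideanSpace ℝ (Fin d) → ℝ)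
    (f' : Fin T → Fin n → EuclideanSpace ℝ (Fin d) → EuclideanSpace ℝ (Fin d))
    (hsub : ∀ t j, DRSubmodularOn d (f t j))
    (hnonneg : ∀ t j, ∀ x ∈ cube d, 0 ≤ f t j x)
    (hmono : ∀ t j, ∀ x ∈ cube d, ∀ y ∈ cube d, (∀ i, x i ≤ y i) → f t j x ≤ f t j y)
    (hzero : ∀ t j, f t j 0 = 0)
    (hgrad : ∀ t j, ∀ x ∈ cube d, HasGradientWithinAt (f t j) (f' t j x) (cube d) x)
    (hcont : ∀ t j, ContinuousOn (f' t j) (cube d))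
    (hlip : ∀ t j, ∀ x ∈ cube d, ∀ y ∈ cube d, ‖f' t j x - f' t j y‖ ≤ β * ‖x - y‖)
    (xhat : Fin T → Fin n → EuclideanSpace ℝ (Fin d))
    (hxhat : ∀ t j, xhat t j ∈ K)
    (g : Fin T → Fin n → EuclideanSpace ℝ (Fin d) → EuclideanSpace ℝ (Fin d))
    (hg : ∀ t j, ∀ x ∈ K, g t j x = ∫ z in (0:ℝ)..1, Real.exp (z - 1) • f' t j (z • x)) :
    ∀ i : Fin n, ∀ x ∈ K,
      (1 - 1 / Real.exp 1) * (∑ t, ∑ j, f t j x) - ∑ t, ∑ j, f t j (xhat t i) ≤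
        (∑ t, ∑ j, (inner ℝ (g t j (xhat t j)) (x - xhat t i) : ℝ)) +
          (∑ t, ∑ j,
            (inner ℝ (f' t j (xhat t j) - g t j (xhat t j)) (xhat t j - xhat t i) : ℝ)) +
          (β / 2) * ∑ t, ∑ j, ‖xhat t i - xhat t j‖ ^ 2 :=
  reduction_boosting_monotone_smooth_general d n T K hKX β f f' hsub hmono hzero hgrad hcont hlip
    xhat hxhat g hg
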